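/- Let A be a unital complex *-algebra and let τ₁ and τ₂ be two topologies on A, each making A a unital pro-C*-algebra. Then the sets of bounded elements with respect to τ₁ and τ₂ coincide: an element a ∈ A satisfies sup_p p(a) < ∞ over all τ₁-continuous C*-seminorms p if and only if it satisfies the corresponding condition for τ₂. That is, A_b depends only on the underlying *-algebra of A, not on its topology. -/

import Mathlib

open scoped ENNReal

def IsCStarSeminorm {A : Type*} [Ring A] [StarRing A] [Algebra ℂ A] (p : A → ℝ) : Prop :=
  (∀ a, 0 ≤ p a) ∧ (∀ a b, p (a + b) ≤ p a + p b) ∧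
    (∀ (c : ℂ) (a : A), p (c • a) = ‖c‖ * p a) ∧
    (∀ a b, p (a * b) ≤ p a * p b) ∧ (∀ a, p (star a * a) = p a ^ 2)

def contCStarSeminorms (A : Type*) [TopologicalSpace A] [Ring A] [StarRing A] [Algebra ℂ A] :
    Set (A → ℝ) :=
  {p | IsCStarSeminorm p ∧ Continuous p}

class ProCStarAlgebra (A : Type*) [UniformSpace A] [Ring A] [StarRing A] [Algebra ℂ A] :
    Prop where
  t2 : T2Space A
  complete : CompleteSpace A
  topologicalRing : IsTopologicalRing A
  continuousStar : ContinuousStar A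
  uniformAddGroup : IsUniformAddGroup A
  mem_nhds_zero : ∀ s : Set A, s ∈ nhds (0 : A) ↔
    ∃ p ∈ contCStarSeminorms A, ∃ ε : ℝ, 0 < ε ∧ {a : A | p a < ε} ⊆ s

noncomputable def uniformNorm (A : Type*) [UniformSpace A] [Ring A] [StarRing A] [Algebra ℂ A]
    (a : A) : ℝ≥0∞ :=
  ⨆ p ∈ contCStarSeminorms A, ENNReal.ofReal (p a)

def boundedElems (A : Type*) [UniformSpace A] [Ring A] [StarRing A] [Algebra ℂ A] : Set A :=
  {a | uniformNorm A a < ⊤}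

def expSet (A : Type*) [UniformSpace A] [Ring A] [StarRing A] [Algebra ℂ A] : Set A :=
  {w | ∃ (n : ℕ) (a e : Fin n → A),
    (∀ j, star (a j) = a j) ∧
    (∀ j, HasSum (fun k : ℕ => ((Complex.I ^ k / (k.factorial : ℂ)) • a j ^ k)) (e j)) ∧
    w = (List.ofFn e).prod}


/-!
In a pro-C*-algebra, `a` is bounded iff `q a` is bounded uniformly over *all* C*-seminorms `q`,
continuous or not, a condition that does not mention the topology. Indeed, if `p a ≤ M` for every
continuous `p`, then for `‖z‖ > M ^ 2` the Neumann series of `z⁻¹ • (star a * a)` converges by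
completeness, so the spectrum of `star a * a` in `A` lies in the disc of radius `M ^ 2`. An
arbitrary C*-seminorm `q` extends to the Banach completion of `(A, q)`, where spectra can only
shrink, and where, by Gelfand's formula and the identity `q (x ^ 2 ^ k) = q x ^ 2 ^ k` for
selfadjoint `x`, the spectral radius of `star a * a` is `q (star a * a) = q a ^ 2`. Hence
`q a ≤ M`.
-/

open Metric

universe u

section

variable {A : Type u} [Ring A] [StarRing A] [Algebra ℂ A]

namespace IsCStarSeminorm

variable {p : A → ℝ}

theorem nonneg (hp : IsCStarSeminorm p) (a : A) : 0 ≤ p a := hp.1 a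

theorem map_add_le (hp : IsCStarSeminorm p) (a b : A) : p (a + b) ≤ p a + p b := hp.2.1 a b

theorem map_smul (hp : IsCStarSeminorm p) (c : ℂ) (a : A) : p (c • a) = ‖c‖ * p a := hp.2.2.1 c a

theorem map_mul_le (hp : IsCStarSeminorm p) (a b : A) : p (a * b) ≤ p a * p b := hp.2.2.2.1 a b

theorem map_star_mul_self (hp : IsCStarSeminorm p) (a : A) : p (star a * a) = p a ^ 2 :=
  hp.2.2.2.2 a

theorem map_zero (hp : IsCStarSeminorm p) : p 0 = 0 := by
  simpa using hp.map_smul 0 0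

theorem map_one_le (hp : IsCStarSeminorm p) : p 1 ≤ 1 := by
  have h := hp.map_star_mul_self 1
  rw [star_one, one_mul] at h
  nlinarith [hp.nonneg 1]

theorem map_sum_le (hp : IsCStarSeminorm p) {ι : Type*} (s : Finset ι) (f : ι → A) :
    p (∑ i ∈ s, f i) ≤ ∑ i ∈ s, p (f i) :=
  Finset.le_sum_of_subadditive p hp.map_zero.le hp.map_add_le s f

theorem map_pow_le (hp : IsCStarSeminorm p) (a : A) (n : ℕ) : p (a ^ n) ≤ p a ^ n := by
  induction n with
  | zero => simpa using hp.map_one_le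
  | succ n ih =>
    rw [pow_succ, pow_succ]
    exact (hp.map_mul_le _ _).trans (mul_le_mul_of_nonneg_right ih (hp.nonneg a))

theorem map_pow_two_pow {x : A} (hp : IsCStarSeminorm p) (hx : IsSelfAdjoint x) (k : ℕ) :
    p (x ^ 2 ^ k) = p x ^ 2 ^ k := by
  induction k with
  | zero => simp
  | succ k ih =>
    calc p (x ^ 2 ^ (k + 1)) = p (star (x ^ 2 ^ k) * x ^ 2 ^ k) := by
          rw [(hx.pow _).star_eq, ← pow_add, ← two_mul, pow_succ']
      _ = p x ^ 2 ^ (k + 1) := by rw [hp.map_star_mul_self, ih, ← pow_mul, pow_succ]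

def toRingSeminorm (hp : IsCStarSeminorm p) : RingSeminorm A where
  toFun := p
  map_zero' := hp.map_zero
  add_le' := hp.map_add_le
  neg' a := by simpa using hp.map_smul (-1) a
  mul_le' := hp.map_mul_le

open UniformSpace in
theorem exists_algHom_norm_eq (hp : IsCStarSeminorm p) :
    ∃ (B : Type u) (_ : NormedRing B) (_ : NormedAlgebra ℂ B) (_ : CompleteSpace B)
      (ψ : A →ₐ[ℂ] B), ∀ a, ‖ψ a‖ = p a := by
  let _ : SeminormedRing A := hp.toRingSeminorm.toSeminormedRing
  let _ : NormedSpace ℂ A := ⟨fun c a => (hp.map_smul c a).le⟩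
  let _ : NormedAlgebra ℂ (Completion A) := { norm_smul_le := norm_smul_le }
  exact ⟨Completion A, inferInstance, inferInstance, inferInstance,
    { Completion.coeRingHom with commutes' := fun _ => rfl }, Completion.norm_coe⟩

end IsCStarSeminorm

section Spectrum

variable {B : Type*} [NormedRing B] [NormedAlgebra ℂ B] [CompleteSpace B]

theorem spectralRadius_eq_nnnorm_of_nnnorm_pow_two_pow {y : B}
    (hy : ∀ k : ℕ, ‖y ^ 2 ^ k‖₊ = ‖y‖₊ ^ 2 ^ k) : spectralRadius ℂ y = ‖y‖₊ := by
  refine tendsto_nhds_unique ((spectrum.pow_nnnorm_pow_one_div_tendsto_nhds_spectralRadius y).comp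
    (tendsto_pow_atTop_atTop_of_one_lt one_lt_two)) (tendsto_const_nhds.congr fun k => ?_)
  rw [Function.comp_apply, hy, ENNReal.coe_pow, ← ENNReal.rpow_natCast, ← ENNReal.rpow_mul]
  simp

theorem norm_le_of_spectrum_subset_closedBall {y : B}
    (hy : ∀ k : ℕ, ‖y ^ 2 ^ k‖₊ = ‖y‖₊ ^ 2 ^ k) {r : ℝ} (hr : 0 ≤ r)
    (hspec : spectrum ℂ y ⊆ closedBall 0 r) : ‖y‖ ≤ r := by
  have hρ : spectralRadius ℂ y ≤ ENNReal.ofReal r := iSup₂_le fun z hz => by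
    rw [← ENNReal.ofReal_coe_nnreal, coe_nnnorm]
    exact ENNReal.ofReal_le_ofReal (mem_closedBall_zero_iff.mp (hspec hz))
  rwa [spectralRadius_eq_nnnorm_of_nnnorm_pow_two_pow hy, ← ENNReal.ofReal_coe_nnreal,
    coe_nnnorm, ENNReal.ofReal_le_ofReal_iff hr] at hρ

end Spectrum

theorem IsCStarSeminorm.le_of_spectrum_star_mul_self_subset_closedBall {p : A → ℝ}
    (hp : IsCStarSeminorm p) {a : A} {M : ℝ} (hM : 0 ≤ M)
    (hspec : spectrum ℂ (star a * a) ⊆ closedBall 0 (M ^ 2)) : p a ≤ M := by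
  obtain ⟨B, _, _, _, ψ, hψ⟩ := hp.exists_algHom_norm_eq
  have hpow (k : ℕ) : ‖ψ (star a * a) ^ 2 ^ k‖₊ = ‖ψ (star a * a)‖₊ ^ 2 ^ k := by
    ext
    simp only [coe_nnnorm, NNReal.coe_pow, ← map_pow, hψ]
    exact hp.map_pow_two_pow (.star_mul_self a) k
  have hnorm := norm_le_of_spectrum_subset_closedBall hpow (sq_nonneg M)
    ((AlgHom.spectrum_apply_subset ψ _).trans hspec)
  rw [hψ, hp.map_star_mul_self] at hnorm
  exact (pow_le_pow_iff_left₀ (hp.nonneg a) hM two_ne_zero).mp hnorm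

theorem mem_boundedElems_iff [UniformSpace A] {a : A} :
    a ∈ boundedElems A ↔ ∃ M, 0 ≤ M ∧ ∀ p ∈ contCStarSeminorms A, p a ≤ M := by
  refine ⟨fun ha => ⟨(uniformNorm A a).toReal, ENNReal.toReal_nonneg, fun p hp => ?_⟩,
    fun ⟨M, _, hM⟩ => ?_⟩
  · exact (ENNReal.ofReal_le_iff_le_toReal ha.ne).mp
      (le_iSup₂ (f := fun p _ => ENNReal.ofReal (p a)) p hp)
  · exact (iSup₂_le fun p hp => ENNReal.ofReal_le_ofReal (hM p hp)).trans_lt ENNReal.ofReal_lt_top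

section ProCStarAlgebraBounded

variable [UniformSpace A] [ProCStarAlgebra A]

namespace ProCStarAlgebra

instance : T2Space A := t2
instance : CompleteSpace A := complete
instance : IsTopologicalRing A := topologicalRing
instance : IsUniformAddGroup A := uniformAddGroup

theorem summable_of_forall_le {ι : Type*} {f : ι → A} {g : ι → ℝ} (hg : Summable g)
    (hfg : ∀ p ∈ contCStarSeminorms A, ∀ i, p (f i) ≤ g i) : Summable f := by
  refine summable_iff_vanishing.mpr fun e he => ?_
  obtain ⟨p, hp, ε, hε, hball⟩ := (mem_nhds_zero e).mp he
  obtain ⟨s, hs⟩ := summable_iff_vanishing_norm.mp hg ε hε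
  refine ⟨s, fun t ht => hball ?_⟩
  calc p (∑ i ∈ t, f i) ≤ ∑ i ∈ t, p (f i) := hp.1.map_sum_le t f
    _ ≤ ∑ i ∈ t, g i := Finset.sum_le_sum fun i _ => hfg p hp i
    _ ≤ ‖∑ i ∈ t, g i‖ := Real.le_norm_self _
    _ < ε := hs t ht

theorem isUnit_one_sub {c : A} {r : ℝ} (hr0 : 0 ≤ r) (hr1 : r < 1)
    (hc : ∀ p ∈ contCStarSeminorms A, p c ≤ r) : IsUnit (1 - c) := by
  have hsum : Summable (c ^ ·) := summable_of_forall_le (summable_geometric_of_lt_one hr0 hr1)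
    fun p hp k => (hp.1.map_pow_le c k).trans (pow_le_pow_left₀ (hp.1.nonneg c) (hc p hp) k)
  exact ⟨⟨1 - c, ∑' k, c ^ k, hsum.one_sub_mul_tsum_pow, hsum.tsum_pow_mul_one_sub⟩, rfl⟩

theorem spectrum_subset_closedBall {x : A} {R : ℝ} (hR : 0 ≤ R)
    (hx : ∀ p ∈ contCStarSeminorms A, p x ≤ R) : spectrum ℂ x ⊆ closedBall 0 R := by
  intro z hz
  rw [mem_closedBall_zero_iff]
  by_contra! hRz
  have hz0 : z ≠ 0 := norm_pos_iff.mp (hR.trans_lt hRz)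
  have hunit : IsUnit (1 - z⁻¹ • x) := isUnit_one_sub (div_nonneg hR (norm_nonneg z))
    ((div_lt_one (hR.trans_lt hRz)).mpr hRz) fun p hp => by
      rw [hp.1.map_smul, norm_inv, inv_mul_eq_div]
      exact div_le_div_of_nonneg_right (hx p hp) (norm_nonneg z)
  refine spectrum.mem_iff.mp hz ?_
  have hfactor : algebraMap ℂ A z - x = algebraMap ℂ A z * (1 - z⁻¹ • x) := by
    rw [mul_sub, mul_one, ← Algebra.smul_def, smul_smul, mul_inv_cancel₀ hz0, one_smul]
  rw [hfactor]
  exact ((IsUnit.mk0 z hz0).map (algebraMap ℂ A)).mul hunit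

end ProCStarAlgebra

theorem IsCStarSeminorm.le_of_forall_continuous_le {q : A → ℝ} (hq : IsCStarSeminorm q) {a : A}
    {M : ℝ} (hM : 0 ≤ M) (ha : ∀ p ∈ contCStarSeminorms A, p a ≤ M) : q a ≤ M := by
  refine hq.le_of_spectrum_star_mul_self_subset_closedBall hM
    (ProCStarAlgebra.spectrum_subset_closedBall (sq_nonneg M) fun p hp => ?_)
  rw [hp.1.map_star_mul_self]
  exact pow_le_pow_left₀ (hp.1.nonneg a) (ha p hp) 2

theorem ProCStarAlgebra.mem_boundedElems_iff_forall_isCStarSeminorm {a : A} :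
    a ∈ boundedElems A ↔ ∃ M, 0 ≤ M ∧ ∀ q : A → ℝ, IsCStarSeminorm q → q a ≤ M := by
  rw [mem_boundedElems_iff]
  exact ⟨fun ⟨M, hM, ha⟩ => ⟨M, hM, fun q hq => hq.le_of_forall_continuous_le hM ha⟩,
    fun ⟨M, hM, ha⟩ => ⟨M, hM, fun p hp => ha p hp.1⟩⟩

end ProCStarAlgebraBounded

end

/-- If a unital complex *-algebra `A` carries two (uniform) topologies
`u₁`, `u₂`, each making it a unital pro-C*-algebra, then the sets of bounded elements with
respect to the two topologies coincide: `A_b` depends only on the underlying *-algebra. -/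
theorem stmt11 {A : Type*} [Ring A] [StarRing A] [Algebra ℂ A]
    (u₁ u₂ : UniformSpace A)
    (h₁ : @ProCStarAlgebra A u₁ _ _ _) (h₂ : @ProCStarAlgebra A u₂ _ _ _) :
    @boundedElems A u₁ _ _ _ = @boundedElems A u₂ _ _ _ := by
  ext a
  rw [@ProCStarAlgebra.mem_boundedElems_iff_forall_isCStarSeminorm A _ _ _ u₁ h₁,
    @ProCStarAlgebra.mem_boundedElems_iff_forall_isCStarSeminorm A _ _ _ u₂ h₂]
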